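/- arXiv:math/9804012 — 3 statements merged into one kernel-verified Lean document; each statement's English description precedes it below -/
import Mathlib

section
/- Let Ψ : M → N be a surjective monoid morphism between abelian topological monoids such that Ψ is proper and the multiplication of M is proper. Then the multiplication map of N is proper. -/
theorem proper_mul_of_proper_surjective_general {M N : Type*}
    [TopologicalSpace M] [TopologicalSpace N]
    [AddCommMonoid M] [AddCommMonoid N]
    [ContinuousAdd N]
    (Ψ : M →+ N) (hsurj : Function.Surjective Ψ) (hprop : IsProperMap (Ψ : M → N))
    (hmulM : IsProperMap (fun p : M × M => p.1 + p.2)) :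
    IsProperMap (fun p : N × N => p.1 + p.2) := by
  have hsquare : (fun p : N × N => p.1 + p.2) ∘ Prod.map Ψ Ψ = Ψ ∘ fun p : M × M => p.1 + p.2 :=
    funext fun p => (map_add Ψ p.1 p.2).symm
  refine isProperMap_of_comp_of_surj (hprop.continuous.prodMap hprop.continuous) continuous_add
    ?_ (hsurj.prodMap hsurj)
  rw [hsquare]
  exact hprop.comp hmulM

/-- if `Ψ : M → N` is a surjective proper monoid morphism between abelian
topological monoids and the addition of `M` is a proper map, then the addition of `N`
is a proper map. -/
theorem proper_mul_of_proper_surjective {M N : Type*}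
    [TopologicalSpace M] [TopologicalSpace N]
    [AddCommMonoid M] [AddCommMonoid N]
    [ContinuousAdd M] [ContinuousAdd N]
    [T2Space M] [T2Space N] [LocallyCompactSpace M] [LocallyCompactSpace N]
    (Ψ : M →+ N) (hsurj : Function.Surjective Ψ) (hprop : IsProperMap (Ψ : M → N))
    (hmulM : IsProperMap (fun p : M × M => p.1 + p.2)) :
    IsProperMap (fun p : N × N => p.1 + p.2) :=
  proper_mul_of_proper_surjective_general Ψ hsurj hprop hmulM
end

section
/- Let Ψ : M → N be a proper monoid morphism between abelian topological monoids, and suppose the multiplication map of N is proper. Then the multiplication map of M is proper. -/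
theorem proper_mul_of_proper_morphism_general {M N : Type*}
    [TopologicalSpace M] [TopologicalSpace N]
    [AddCommMonoid M] [AddCommMonoid N]
    [ContinuousAdd M]
    [T2Space M]
    (Ψ : M →+ N) (hprop : IsProperMap (Ψ : M → N))
    (hmulN : IsProperMap (fun p : N × N => p.1 + p.2)) :
    IsProperMap (fun p : M × M => p.1 + p.2) := by
  have hcomm : (Ψ : M → N) ∘ (fun p : M × M => p.1 + p.2) =
      (fun p : N × N => p.1 + p.2) ∘ Prod.map Ψ Ψ := by
    funext p
    exact map_add Ψ p.1 p.2
  refine isProperMap_of_comp_of_t2 continuous_add hprop.continuous ?_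
  rw [hcomm]
  exact hmulN.comp (hprop.prodMap hprop)

/-- if `Ψ : M → N` is a proper monoid morphism between abelian topological
monoids and the addition of `N` is a proper map, then the addition of `M` is a proper
map. -/
theorem proper_mul_of_proper_morphism {M N : Type*}
    [TopologicalSpace M] [TopologicalSpace N]
    [AddCommMonoid M] [AddCommMonoid N]
    [ContinuousAdd M] [ContinuousAdd N]
    [T2Space M] [T2Space N] [LocallyCompactSpace M] [LocallyCompactSpace N]
    (Ψ : M →+ N) (hprop : IsProperMap (Ψ : M → N))
    (hmulN : IsProperMap (fun p : N × N => p.1 + p.2)) :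
    IsProperMap (fun p : M × M => p.1 + p.2) :=
  proper_mul_of_proper_morphism_general Ψ hprop hmulN
end

section
/- If an abelian topological monoid M admits a proper monoid morphism (augmentation) Ψ : M → ℤ₊, where ℤ₊ is the discrete monoid of non-negative integers under addition, then the multiplication map of M is proper. -/
/-- if an abelian topological monoid `M` admits a proper augmentation
`Ψ : M → ℤ₊` (the discrete additive monoid of non-negative integers, realized as `ℕ`),
then the addition of `M` is a proper map. -/
theorem proper_mul_of_proper_augmentation {M : Type*}
    [TopologicalSpace M] [AddCommMonoid M] [ContinuousAdd M]
    [T2Space M] [LocallyCompactSpace M]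
    (Ψ : M →+ ℕ) (hprop : IsProperMap (Ψ : M → ℕ)) :
    IsProperMap (fun p : M × M => p.1 + p.2) := by
  rw [isProperMap_iff_isCompact_preimage]
  refine ⟨continuous_add, fun {K} hK => ?_⟩
  obtain ⟨N, hN⟩ : ∃ N, ∀ x ∈ K, Ψ x ≤ N := by
    have hfin : (Ψ '' K).Finite := (hK.image hprop.continuous).finite_of_discrete
    obtain ⟨N, hN⟩ := hfin.bddAbove
    exact ⟨N, fun x hx => hN ⟨x, hx, rfl⟩⟩
  have hcomp : IsCompact ((Ψ ⁻¹' Set.Iic N) ×ˢ (Ψ ⁻¹' Set.Iic N)) :=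
    (hprop.isCompact_preimage (Set.finite_Iic N).isCompact).prod
      (hprop.isCompact_preimage (Set.finite_Iic N).isCompact)
  refine hcomp.of_isClosed_subset (hK.isClosed.preimage continuous_add) ?_
  rintro ⟨a, b⟩ hab
  have h : Ψ a + Ψ b ≤ N := by rw [← map_add]; exact hN _ hab
  exact ⟨le_trans (Nat.le_add_right _ _) h, le_trans (Nat.le_add_left _ _) h⟩
end
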